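/- For every λ ≠ 0 in ℂ, the 4-dimensional algebra L⁴₁₂(λ) with basis e₁,e₂,e₃,e₄ and nonzero products e₁e₁ = λe₃, e₁e₂ = e₄, e₂e₁ = e₃, e₂e₂ = e₃, e₂e₃ = e₄, e₃e₁ = λe₄ is a nilpotent left-symmetric algebra that is not a Novikov algebra. -/

import Mathlib

/-!
Give `e₁, e₂` weight 0, `e₃` weight 1 and `e₄` weight 2. Every structure constant of `L⁴₁₂(λ)`
raises weight by at least one, so the vectors vanishing in weights `< n` form a filtration with
`F i · F j ⊆ F (i + j + 1)`; all products of four elements lie in `F 3 = 0`. Left-symmetry is a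
coordinatewise polynomial identity, and `(e₂e₂)e₁ = λe₄ ≠ 0 = (e₂e₁)e₂` breaks the Novikov identity.
-/

/-- Span of the set of products of an element of `S` with an element of `T`. -/
def mulSpan {V : Type*} [AddCommGroup V] [Module ℂ V] (mul : V → V → V)
    (S T : Submodule ℂ V) : Submodule ℂ V :=
  Submodule.span ℂ {z | ∃ x ∈ S, ∃ y ∈ T, z = mul x y}

/-- `piece mul n` is the span of all products of `n + 1` elements of the
algebra `(V, mul)`, with all possible bracketings. -/
def piece {V : Type*} [AddCommGroup V] [Module ℂ V] (mul : V → V → V) : ℕ → Submodule ℂ V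
  | 0 => ⊤
  | n + 1 => ⨆ i : Fin (n + 1), mulSpan mul (piece mul i.1) (piece mul (n - i.1))

/-- An algebra is nilpotent if some power (with all bracketings) is zero. -/
def IsNilpotentMul {V : Type*} [AddCommGroup V] [Module ℂ V] (mul : V → V → V) : Prop :=
  ∃ n : ℕ, piece mul n = ⊥

/-- Multiplication of the algebra `L⁴₁₂(λ)`: on the basis `e₁, e₂, e₃, e₄`
(indexed `0,…,3`) the nonzero products are `e₁e₁ = λe₃`, `e₁e₂ = e₄`,
`e₂e₁ = e₃`, `e₂e₂ = e₃`, `e₂e₃ = e₄`, `e₃e₁ = λe₄`. -/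
def mulL412 (l : ℂ) (x y : Fin 4 → ℂ) : Fin 4 → ℂ :=
  ![0, 0, l * (x 0 * y 0) + x 1 * y 0 + x 1 * y 1,
    x 0 * y 1 + x 1 * y 2 + l * (x 2 * y 0)]

open Submodule

theorem piece_le_of_mul_mem {V : Type*} [AddCommGroup V] [Module ℂ V] {mul : V → V → V}
    {F : ℕ → Submodule ℂ V} (hF : F 0 = ⊤)
    (hmul : ∀ {i j x y}, x ∈ F i → y ∈ F j → mul x y ∈ F (i + j + 1)) (n : ℕ) :
    piece mul n ≤ F n := by
  induction n using Nat.strong_induction_on with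
  | _ n ih =>
    cases n with
    | zero => simp [piece, hF]
    | succ n =>
      rw [piece]
      refine iSup_le fun i => span_le.2 ?_
      rintro _ ⟨x, hx, y, hy, rfl⟩
      have hxy := hmul (ih i (by omega) hx) (ih (n - i) (by omega) hy)
      rwa [show i + (n - i) + 1 = n + 1 by omega] at hxy

theorem isNilpotentMul_of_mul_mem {V : Type*} [AddCommGroup V] [Module ℂ V] {mul : V → V → V}
    {F : ℕ → Submodule ℂ V} (hF : F 0 = ⊤)
    (hmul : ∀ {i j x y}, x ∈ F i → y ∈ F j → mul x y ∈ F (i + j + 1)) {n : ℕ} (hn : F n = ⊥) :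
    IsNilpotentMul mul :=
  ⟨n, eq_bot_iff.2 (hn ▸ piece_le_of_mul_mem hF hmul n)⟩

def weightFiltration {R ι : Type*} [Semiring R] (w : ι → ℕ) (n : ℕ) : Submodule R (ι → R) :=
  Submodule.pi {k | w k < n} fun _ => ⊥

theorem mem_weightFiltration {R ι : Type*} [Semiring R] {w : ι → ℕ} {n : ℕ} {v : ι → R} :
    v ∈ weightFiltration w n ↔ ∀ k, w k < n → v k = 0 := by
  simp [weightFiltration]

theorem weightFiltration_zero {R ι : Type*} [Semiring R] (w : ι → ℕ) :
    weightFiltration (R := R) w 0 = ⊤ :=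
  eq_top_iff.2 fun _ _ => mem_weightFiltration.2 fun _ hk => absurd hk (Nat.not_lt_zero _)

theorem weightFiltration_eq_bot {R ι : Type*} [Semiring R] {w : ι → ℕ} {n : ℕ}
    (hw : ∀ k, w k < n) : weightFiltration (R := R) w n = ⊥ :=
  eq_bot_iff.2 fun _ hv =>
    (Submodule.mem_bot R).2 (funext fun k => mem_weightFiltration.1 hv k (hw k))

def weightL412 : Fin 4 → ℕ := ![0, 0, 1, 2]

theorem mulL412_mem_weightFiltration (l : ℂ) {i j : ℕ} {x y : Fin 4 → ℂ}
    (hx : x ∈ weightFiltration weightL412 i) (hy : y ∈ weightFiltration weightL412 j) :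
    mulL412 l x y ∈ weightFiltration weightL412 (i + j + 1) := by
  simp only [weightL412, mem_weightFiltration, Fin.forall_fin_succ, Fin.isValue,
    Matrix.cons_val_zero, Matrix.cons_val_succ, Fin.succ_zero_eq_one, Fin.succ_one_eq_two,
    Matrix.cons_val_fin_one, Fin.reduceSucc, IsEmpty.forall_iff, and_true, mulL412,
    Order.lt_add_one_iff, zero_le, imp_self, forall_const, true_and] at *
  obtain ⟨hx0, hx1, hx2, -⟩ := hx
  obtain ⟨hy0, hy1, hy2, -⟩ := hy
  constructor
  · intro h
    obtain hi | hj : 0 < i ∨ 0 < j := by omega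
    · simp [hx0 hi, hx1 hi]
    · simp [hy0 hj, hy1 hj]
  · intro h
    obtain hi | hj | ⟨hi, hj⟩ : 1 < i ∨ 1 < j ∨ (0 < i ∧ 0 < j) := by omega
    · simp [hx0 (by omega), hx1 (by omega), hx2 hi]
    · simp [hy0 (by omega), hy1 (by omega), hy2 hj]
    · simp [hx0 hi, hx1 hi, hy0 hj, hy1 hj]

theorem mulL412_leftSymmetric (l : ℂ) (x y z : Fin 4 → ℂ) :
    mulL412 l (mulL412 l x y) z - mulL412 l x (mulL412 l y z) =
      mulL412 l (mulL412 l y x) z - mulL412 l y (mulL412 l x z) := by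
  funext k
  fin_cases k <;> simp [mulL412]
  ring

theorem mulL412_not_novikov {l : ℂ} (hl : l ≠ 0) :
    mulL412 l (mulL412 l ![0, 1, 0, 0] ![0, 1, 0, 0]) ![1, 0, 0, 0] ≠
      mulL412 l (mulL412 l ![0, 1, 0, 0] ![1, 0, 0, 0]) ![0, 1, 0, 0] := fun h => by
  simpa [mulL412, hl] using congrFun h 3

theorem isNilpotentMul_mulL412 (l : ℂ) : IsNilpotentMul (mulL412 l) :=
  isNilpotentMul_of_mul_mem (weightFiltration_zero weightL412) (mulL412_mem_weightFiltration l)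
    (n := 3) (weightFiltration_eq_bot (by decide))

/-- for every `λ ≠ 0`, the algebra `L⁴₁₂(λ)` is a nilpotent
left-symmetric algebra that is not a Novikov algebra. -/
theorem L412_nilpotent_leftSymmetric_not_novikov (l : ℂ) (hl : l ≠ 0) :
    (∀ x y z : Fin 4 → ℂ,
      mulL412 l (mulL412 l x y) z - mulL412 l x (mulL412 l y z) =
      mulL412 l (mulL412 l y x) z - mulL412 l y (mulL412 l x z)) ∧
    IsNilpotentMul (mulL412 l) ∧
    ¬ (∀ x y z : Fin 4 → ℂ,
        mulL412 l (mulL412 l x y) z = mulL412 l (mulL412 l x z) y) :=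
  ⟨mulL412_leftSymmetric l, isNilpotentMul_mulL412 l,
    fun hnovikov => mulL412_not_novikov hl (hnovikov _ _ _)⟩
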